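/- For every n ≥ 1, the digraph K*_n satisfies: it has maximum in-degree at most two, it has no two independent cycles, ν(K*_n) = τ(K*_n) = n, and ν*(K*_n) = 1. Consequently, every monotone Boolean network with interaction graph K*_n has at most n+1 fixed points, and some monotone Boolean network with interaction graph K*_n has exactly n+1 fixed points. -/

import Mathlib

open Classical

section Defs

variable {V : Type*}

/-- `f_v` depends on input `u`. -/
def Depends (f : (V → Bool) → V → Bool) (u v : V) : Prop :=
  ∃ x y : V → Bool, (∀ w, w ≠ u → x w = y w) ∧ f x v ≠ f y v

/-- The arcs of a cycle given by the list of its vertices `v₀ … v_m`: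
`(v₀,v₁), …, (v_m, v₀)`. -/
def CycArcs (l : List V) : List (V × V) :=
  (l ++ l.take 1).zip ((l ++ l.take 1).tail)

/-- A (directed) cycle of the digraph `G`, given by its list of (distinct) vertices.
Loops (cycles of length one) are allowed. -/
def IsCycle (G : V → V → Prop) (l : List V) : Prop :=
  l ≠ [] ∧ l.Nodup ∧ ∀ a ∈ CycArcs l, G a.1 a.2

/-- The arcs of a path given by the list of its vertices. -/
def PathArcs (l : List V) : List (V × V) := l.zip l.tail

/-- A (directed) path of `G` with at least one arc, with distinct vertices except that
the first and last vertex may coincide. -/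
def IsPath (G : V → V → Prop) (l : List V) : Prop :=
  2 ≤ l.length ∧ l.dropLast.Nodup ∧ l.tail.Nodup ∧ ∀ a ∈ PathArcs l, G a.1 a.2

/-- A packing: a collection of pairwise vertex-disjoint cycles. -/
def IsPacking (G : V → V → Prop) (P : List (List V)) : Prop :=
  (∀ l ∈ P, IsCycle G l) ∧ P.Pairwise fun l₁ l₂ => ∀ v ∈ l₁, v ∉ l₂

/-- A feedback vertex set: a set of vertices meeting every cycle. -/
def IsFVS (G : V → V → Prop) (I : Finset V) : Prop :=
  ∀ l : List V, IsCycle G l → ∃ v ∈ l, v ∈ I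

/-- `τ(G)`: minimum size of a feedback vertex set. -/
noncomputable def tau [Fintype V] (G : V → V → Prop) : ℕ :=
  sInf {k | ∃ I : Finset V, IsFVS G I ∧ I.card = k}

/-- `ν(G)`: maximum number of pairwise vertex-disjoint cycles. -/
noncomputable def nu (G : V → V → Prop) : ℕ :=
  sSup {k | ∃ P : List (List V), IsPacking G P ∧ P.length = k}

/-- A source: a vertex of in-degree zero. -/
def IsSource (G : V → V → Prop) (v : V) : Prop := ∀ u, ¬ G u v

/-- A principal path w.r.t. a packing `P`: a path none of whose arcs and none of whose
internal vertices belong to a cycle of the packing. -/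
def IsPrincipal (G : V → V → Prop) (P : List (List V)) (l : List V) : Prop :=
  IsPath G l ∧ (∀ a ∈ PathArcs l, ∀ C ∈ P, a ∉ CycArcs C) ∧
    ∀ v ∈ l.tail.dropLast, ∀ C ∈ P, v ∉ C

/-- There is a principal path (w.r.t. packing `P`) from a vertex satisfying `A` to `v`. -/
def PrincipalFrom (G : V → V → Prop) (P : List (List V)) (A : V → Prop) (v : V) : Prop :=
  ∃ l : List V, IsPrincipal G P l ∧ (∃ u, l.head? = some u ∧ A u) ∧ l.getLast? = some v

/-- A special packing. -/
def IsSpecialPacking (G : V → V → Prop) (P : List (List V)) : Prop :=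
  IsPacking G P ∧
    ∀ Ci ∈ P, ∀ v ∈ Ci,
      (∃ Cj ∈ P, Cj ≠ Ci ∧ PrincipalFrom G P (fun u => u ∈ Cj) v) →
      (PrincipalFrom G P (fun u => u ∈ Ci) v ∨ PrincipalFrom G P (IsSource G) v)

/-- `ν*(G)`: maximum size of a special packing. -/
noncomputable def nuStar (G : V → V → Prop) : ℕ :=
  sSup {k | ∃ P : List (List V), IsSpecialPacking G P ∧ P.length = k}

/-- Two vertex-disjoint cycles are independent if there is no arc between them. -/
def Independent (G : V → V → Prop) (C₁ C₂ : List V) : Prop :=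
  (∀ v ∈ C₁, v ∉ C₂) ∧ ∀ u ∈ C₁, ∀ v ∈ C₂, ¬ G u v ∧ ¬ G v u

/-- The arc `uv` is positive. -/
def PosArc [DecidableEq V] (f : (V → Bool) → V → Bool) (u v : V) : Prop :=
  ∀ x : V → Bool, x u = false → f x v ≤ f (Function.update x u true) v

/-- The arc `uv` is negative. -/
def NegArc [DecidableEq V] (f : (V → Bool) → V → Bool) (u v : V) : Prop :=
  ∀ x : V → Bool, x u = false → f (Function.update x u true) v ≤ f x v

/-- The sign of the arc `uv` in the signed interaction graph of `f`. -/
noncomputable def arcSign [DecidableEq V] (f : (V → Bool) → V → Bool) (u v : V) : ℤ :=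
  if PosArc f u v then 1 else if NegArc f u v then -1 else 0

/-- The sign of a cycle: product of the signs of its arcs. -/
def CycleSign (σ : V → V → ℤ) (l : List V) : ℤ :=
  ((CycArcs l).map fun a => σ a.1 a.2).prod

/-- `ν⁺(G,σ)`: maximum number of pairwise vertex-disjoint non-negative cycles. -/
noncomputable def nuPlus (G : V → V → Prop) (σ : V → V → ℤ) : ℕ :=
  sSup {k | ∃ P : List (List V),
    IsPacking G P ∧ (∀ C ∈ P, 0 ≤ CycleSign σ C) ∧ P.length = k}

/-- A monotone feedback vertex set of `(G,σ)`. -/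
def IsMonFVS (G : V → V → Prop) (σ : V → V → ℤ) (J : Finset V) : Prop :=
  IsFVS G J ∧ ∀ u v, G u v → σ u v ≠ 1 → v ∈ J

/-- `τ_m(G,σ)`: minimum size of a monotone feedback vertex set. -/
noncomputable def tauM [Fintype V] (G : V → V → Prop) (σ : V → V → ℤ) : ℕ :=
  sInf {k | ∃ J : Finset V, IsMonFVS G σ J ∧ J.card = k}

/-- The `I`-switch of the arc-labelling `σ`. -/
noncomputable def switchSign (σ : V → V → ℤ) (I : Finset V) (u v : V) : ℤ :=
  if ((u ∈ I) ↔ (v ∈ I)) then σ u v else -σ u v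

/-- `τ*_m(G,σ)`: minimum of `τ_m` over all switches of `(G,σ)`. -/
noncomputable def tauMStar [Fintype V] (G : V → V → Prop) (σ : V → V → ℤ) : ℕ :=
  sInf {k | ∃ I : Finset V, tauM G (switchSign σ I) = k}

end Defs

section Patterns

variable {m : Type*}

/-- A `k`-pattern in `P ⊆ {0,1}^m`. -/
def IsPattern (P : Set (m → Bool)) (k : ℕ) (X Y : Fin k → m → Bool) : Prop :=
  Function.Injective X ∧ Function.Injective Y ∧
    (∀ p, X p ∈ P) ∧ (∀ p, Y p ∈ P) ∧ ∀ p q, X p ≤ Y q ↔ p ≠ q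

/-- `P` has a `k`-pattern. -/
def HasPattern (P : Set (m → Bool)) (k : ℕ) : Prop :=
  ∃ X Y, IsPattern P k X Y

/-- `P` has a special `k`-pattern: a `k`-pattern with `y^p = complement of x^p`. -/
def HasSpecialPattern (P : Set (m → Bool)) (k : ℕ) : Prop :=
  ∃ X Y, IsPattern P k X Y ∧ ∀ p, Y p = fun v => !(X p v)

end Patterns

open Fin.CommRing Fin.NatCast

section FinAux
variable {n : ℕ}

lemma val_add_one [NeZero n] (a : Fin n) : ((a + 1 : Fin n) : ℕ) = ((a : ℕ) + 1) % n := by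
  rw [Fin.add_def, Fin.val_one']
  conv_rhs => rw [Nat.add_mod, Nat.mod_eq_of_lt a.isLt]

lemma sub_one_add_one [NeZero n] (a : Fin n) : (((a - 1 : Fin n) : ℕ) + 1) % n = (a : ℕ) := by
  have h : ((a - 1) + 1 : Fin n) = a := by ring
  rw [← val_add_one, h]

lemma val_sub_nat [NeZero n] (c : Fin n) (t : ℕ) (ht : t ≤ c.val) :
    ((c - (t : Fin n) : Fin n) : ℕ) = c.val - t := by
  have hc := c.isLt
  rw [Fin.sub_def]
  simp only [Fin.val_natCast]
  have h1 : t % n = t := Nat.mod_eq_of_lt (lt_of_le_of_lt ht hc)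
  rw [h1]
  have h2 : n - t + c.val = n + (c.val - t) := by omega
  rw [h2, Nat.add_mod_left, Nat.mod_eq_of_lt (by omega)]

lemma sub_nat_succ [NeZero n] (a : Fin n) (t : ℕ) :
    a - ((t : ℕ) : Fin n) - 1 = a - (((t+1) : ℕ) : Fin n) := by
  push_cast
  ring

lemma sub_dist [NeZero n] (a b : Fin n) : a - (((a - b : Fin n) : ℕ) : Fin n) = b := by
  rw [Fin.cast_val_eq_self]
  ring

lemma sub_val_eq_zero_iff [NeZero n] (a b : Fin n) : ((a - b : Fin n) : ℕ) = 0 ↔ a = b := by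
  rw [show (0:ℕ) = ((0 : Fin n) : ℕ) from rfl, Fin.val_inj, sub_eq_zero]

end FinAux


section ListAux
variable {α : Type*}

lemma mem_zip_tail (m : List α) (i : ℕ) (h : i + 1 < m.length) :
    (m[i], m[i+1]) ∈ m.zip m.tail := by
  have ht : i < m.tail.length := by rw [List.length_tail]; omega
  have hz : i < (m.zip m.tail).length := by
    rw [List.length_zip, List.length_tail]; omega
  have hg : (m.zip m.tail)[i] = (m[i], m.tail[i]) := List.getElem_zip
  rw [List.getElem_tail] at hg
  rw [← hg]
  exact List.getElem_mem hz

lemma of_mem_zip_tail {m : List α} {a : α × α} (h : a ∈ m.zip m.tail) :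
    ∃ i, ∃ _ : i + 1 < m.length, a = (m[i], m[i+1]) := by
  obtain ⟨i, hi, hia⟩ := List.mem_iff_getElem.mp h
  have hlen : i + 1 < m.length := by
    rw [List.length_zip, List.length_tail] at hi; omega
  refine ⟨i, hlen, ?_⟩
  rw [← hia]
  have ht : i < m.tail.length := by rw [List.length_tail]; omega
  have hg : (m.zip m.tail)[i] = (m[i], m.tail[i]) := List.getElem_zip
  rw [List.getElem_tail] at hg
  exact hg

lemma take_one_append {l : List α} (hl : l ≠ []) (hi : 0 < l.length) :
    (l ++ l.take 1).length = l.length + 1 ∧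
    (∀ i (h : i < l.length), (l ++ l.take 1)[i]'(by simp [List.length_append]; omega) = l[i]) ∧
    (l ++ l.take 1)[l.length]'(by simp [List.length_append]; omega) = l[0] := by
  have h1 : (l.take 1).length = 1 := by rw [List.length_take]; omega
  refine ⟨by rw [List.length_append, h1], fun i h => List.getElem_append_left h, ?_⟩
  rw [List.getElem_append_right (le_refl _)]
  simp [List.getElem_take]

lemma getElem_idx_congr {l : List α} {i j : ℕ} (e : i = j) (h : i < l.length) :
    l[i]'h = l[j]'(e ▸ h) := by subst e; rfl

lemma cycArcs_mem {l : List α} (hl : l ≠ []) (i : ℕ) (h : i < l.length) :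
    (l[i], l[(i+1) % l.length]'(Nat.mod_lt _ (by omega))) ∈ CycArcs l := by
  have hi : 0 < l.length := List.length_pos_iff.mpr hl
  obtain ⟨hlen, hget, hlast⟩ := take_one_append hl hi
  have hm : i + 1 < (l ++ l.take 1).length := by omega
  have := mem_zip_tail (l ++ l.take 1) i hm
  unfold CycArcs
  convert this using 2
  · exact (hget i h).symm
  · rcases Nat.lt_or_ge (i+1) l.length with h2 | h2
    · rw [hget (i+1) h2]
      congr 1
      exact Nat.mod_eq_of_lt h2
    · have he : i + 1 = l.length := by omega
      have e1 : (i+1) % l.length = 0 := by rw [he, Nat.mod_self]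
      rw [getElem_idx_congr e1, getElem_idx_congr he, hlast]

lemma cycArcs_spec {l : List α} {a : α × α} (h : a ∈ CycArcs l) :
    ∃ i, ∃ _ : i < l.length, a = (l[i], l[(i+1) % l.length]'(Nat.mod_lt _ (by omega))) := by
  have hl : l ≠ [] := by
    rintro rfl
    simp [CycArcs] at h
  have hi : 0 < l.length := List.length_pos_iff.mpr hl
  obtain ⟨hlen, hget, hlast⟩ := take_one_append hl hi
  obtain ⟨i, him, ha⟩ := of_mem_zip_tail h
  rw [hlen] at him
  have h1 : i < l.length := by omega
  refine ⟨i, h1, ?_⟩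
  rw [ha]
  congr 1
  · exact hget i h1
  · rcases Nat.lt_or_ge (i+1) l.length with h2 | h2
    · rw [hget (i+1) h2]
      congr 1
      exact (Nat.mod_eq_of_lt h2).symm
    · have he : i + 1 = l.length := by omega
      have e1 : (i+1) % l.length = 0 := by rw [he, Nat.mod_self]
      rw [getElem_idx_congr he, hlast, getElem_idx_congr e1]

lemma cycArcs_fst_mem {l : List α} {a : α × α} (h : a ∈ CycArcs l) : a.1 ∈ l := by
  obtain ⟨i, hi, rfl⟩ := cycArcs_spec h
  exact List.getElem_mem hi

lemma cycArcs_snd_mem {l : List α} {a : α × α} (h : a ∈ CycArcs l) : a.2 ∈ l := by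
  obtain ⟨i, hi, rfl⟩ := cycArcs_spec h
  exact List.getElem_mem _

lemma cyc_pred {G : α → α → Prop} {l : List α} (hc : IsCycle G l) {v : α} (hv : v ∈ l) :
    ∃ u ∈ l, (u, v) ∈ CycArcs l ∧ G u v := by
  obtain ⟨hne, hnd, harc⟩ := hc
  obtain ⟨j, hj, rfl⟩ := List.mem_iff_getElem.mp hv
  have hlen : 0 < l.length := by omega
  set i := (j + l.length - 1) % l.length with hidef
  have hil : i < l.length := Nat.mod_lt _ hlen
  have hsucc : (i + 1) % l.length = j := by
    rcases Nat.eq_zero_or_pos j with rfl | hj0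
    · have : i = l.length - 1 := by
        rw [hidef]; rw [Nat.mod_eq_of_lt (by omega)]; omega
      rw [this]
      have : l.length - 1 + 1 = l.length := by omega
      rw [this, Nat.mod_self]
    · have : i = j - 1 := by
        rw [hidef]
        have : j + l.length - 1 = (j - 1) + l.length := by omega
        rw [this, Nat.add_mod_right, Nat.mod_eq_of_lt (by omega)]
      rw [this, Nat.mod_eq_of_lt (by omega)]
      omega
  have hmem := cycArcs_mem hne i hil
  have heq : l[(i+1) % l.length]'(Nat.mod_lt _ (by omega)) = l[j] := by
    congr 1
  refine ⟨l[i], List.getElem_mem hil, ?_, ?_⟩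
  · rw [← heq]; exact hmem
  · have := harc _ hmem
    simpa [heq] using this

end ListAux


/-- The digraph `K*_n` on `N × N`, `N = {0,…,n−1}`: arcs from `(i,j)` to `(i,j+1)`
(sum modulo `n`), and from `(i,i)` to `(j,i)` for `i ≠ j`. -/
def Kstar (n : ℕ) (a b : Fin n × Fin n) : Prop :=
  (b.1 = a.1 ∧ (b.2 : ℕ) = ((a.2 : ℕ) + 1) % n) ∨ (a.1 = a.2 ∧ b.2 = a.1 ∧ b.1 ≠ a.1)


section KstarAux

variable {n : ℕ}

lemma kstar_char [NeZero n] (u v : Fin n × Fin n) :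
    Kstar n u v ↔ u = (v.1, v.2 - 1) ∨ (u = (v.2, v.2) ∧ v.1 ≠ v.2) := by
  constructor
  · rintro (⟨h1, h2⟩ | ⟨h1, h2, h3⟩)
    · left
      have hv2 : v.2 = u.2 + 1 := by
        apply Fin.val_inj.mp
        rw [val_add_one]; exact h2
      have : u.2 = v.2 - 1 := by rw [hv2]; ring
      exact Prod.ext h1.symm this
    · right
      constructor
      · have ha : u.1 = v.2 := h2.symm
        have hb : u.2 = v.2 := by rw [h2, h1]
        exact Prod.ext_iff.mpr ⟨ha, hb⟩
      · intro hc; exact h3 (hc.trans h2)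
  · rintro (h | ⟨h, hne⟩)
    · subst h
      exact Or.inl ⟨rfl, (sub_one_add_one v.2).symm⟩
    · subst h
      exact Or.inr ⟨rfl, rfl, hne⟩

lemma kstar_pred [NeZero n] (v : Fin n × Fin n) : Kstar n (v.1, v.2 - 1) v :=
  (kstar_char _ v).mpr (Or.inl rfl)

lemma kstar_row [NeZero n] (i j : Fin n) : Kstar n (i, j) (i, j + 1) :=
  Or.inl ⟨rfl, (val_add_one j)⟩

lemma kstar_jump (i j : Fin n) (h : j ≠ i) : Kstar n (i, i) (j, i) :=
  Or.inr ⟨rfl, rfl, h⟩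

lemma kstar_no_source [NeZero n] (v : Fin n × Fin n) : ¬ IsSource (Kstar n) v :=
  fun hs => hs _ (kstar_pred v)

lemma cyc_diag [NeZero n] {C : List (Fin n × Fin n)} (hC : IsCycle (Kstar n) C) :
    ∃ i : Fin n, (i, i) ∈ C := by
  obtain ⟨v, hv⟩ := List.exists_mem_of_ne_nil _ hC.1
  have main : ∀ t : ℕ, (∃ i : Fin n, (i, i) ∈ C) ∨ (v.1, v.2 - (t : Fin n)) ∈ C := by
    intro t
    induction t with
    | zero => right; simpa using hv
    | succ t ih =>
      rcases ih with h | h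
      · exact Or.inl h
      · obtain ⟨u, huC, _, hk⟩ := cyc_pred hC h
        rcases (kstar_char u _).mp hk with h1 | ⟨h1, _⟩
        · right
          rw [h1] at huC
          simpa [sub_nat_succ v.2 t] using huC
        · left
          refine ⟨v.2 - (t : Fin n), ?_⟩
          rw [h1] at huC
          simpa using huC
  rcases main ((v.2 - v.1 : Fin n) : ℕ) with h | h
  · exact h
  · refine ⟨v.1, ?_⟩
    rwa [sub_dist] at h

lemma key_lemma [NeZero n] {C₁ C₂ : List (Fin n × Fin n)} (h1 : IsCycle (Kstar n) C₁)
    (h2 : IsCycle (Kstar n) C₂) (hdisj : ∀ v ∈ C₁, v ∉ C₂) :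
    ∃ i j : Fin n, i ≠ j ∧ (i, i) ∈ C₁ ∧ (j, i) ∈ C₂ ∧
      ((j, i - 1), (j, i)) ∈ CycArcs C₂ := by
  obtain ⟨i₀, hi₀⟩ := cyc_diag h1
  obtain ⟨j₀, hj₀⟩ := cyc_diag h2
  set S : Set ℕ := {d | ∃ i j : Fin n, (i, i) ∈ C₁ ∧ (j, j) ∈ C₂ ∧ ((j - i : Fin n) : ℕ) = d}
    with hS
  have hSne : S.Nonempty := ⟨_, i₀, j₀, hi₀, hj₀, rfl⟩
  obtain ⟨i, j, hi, hj, hd⟩ := Nat.sInf_mem hSne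
  set d := sInf S with hdd
  have hd0 : d ≠ 0 := by
    intro h0
    have : i = j := by
      have := hd.trans (hdd ▸ h0)
      exact ((sub_val_eq_zero_iff j i).mp this).symm
    exact hdisj _ hi (this ▸ hj)
  have hij : i ≠ j := by
    intro h; apply hd0; rw [← hd, h, sub_self]; rfl
  have hdn : d < n := by rw [← hd]; exact (j - i).isLt
  -- chain backwards
  have chain : ∀ t : ℕ, t ≤ d → (j, j - (t : Fin n)) ∈ C₂ := by
    intro t
    induction t with
    | zero => intro _; simpa using hj
    | succ t ih =>
      intro hts
      have hmem := ih (by omega)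
      obtain ⟨u, huC, _, hk⟩ := cyc_pred h2 hmem
      rcases (kstar_char u _).mp hk with hu | ⟨hu, hne⟩
      · rw [hu] at huC
        simpa [sub_nat_succ j t] using huC
      · exfalso
        -- jump predecessor: diag (j - t, j - t) in C₂, closer to i
        simp only at hne
        -- hne : j ≠ j - t
        have ht1 : 1 ≤ t := by
          by_contra h
          push_neg at h
          interval_cases t
          simp at hne
        have htd : t < d := by omega
        have hdist : (((j - (t : Fin n)) - i : Fin n) : ℕ) = d - t := by
          have e : ((j - (t : Fin n)) - i : Fin n) = (j - i) - (t : Fin n) := by ring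
          rw [e, val_sub_nat (j - i) t (by omega), hd]
        have hmemS : (d - t) ∈ S := by
          refine ⟨i, j - (t : Fin n), hi, ?_, hdist⟩
          rw [hu] at huC
          simpa using huC
        have := Nat.sInf_le hmemS
        omega
  have hji : (j, i) ∈ C₂ := by
    have := chain d (le_refl d)
    rwa [← hd, sub_dist] at this
  obtain ⟨u, huC, harc, hk⟩ := cyc_pred h2 hji
  rcases (kstar_char u _).mp hk with hu | ⟨hu, _⟩
  · subst hu
    exact ⟨i, j, hij, hi, hji, harc⟩
  · exfalso
    subst hu
    exact hdisj _ hi huC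

end KstarAux



section PackingAux

variable {α : Type*}

lemma packing_not_mem_two {P : List (List α)}
    (hP : P.Pairwise fun l₁ l₂ => ∀ v ∈ l₁, v ∉ l₂)
    {s t : ℕ} (hs : s < P.length) (ht : t < P.length) (hst : s ≠ t) {v : α}
    (h1 : v ∈ P[s]) (h2 : v ∈ P[t]) : False := by
  rw [List.pairwise_iff_getElem] at hP
  rcases Nat.lt_or_ge s t with h | h
  · exact hP s t hs ht h v h1 h2
  · exact hP t s ht hs (by omega) v h2 h1

lemma mem_eq_of_mem_packing {P : List (List α)}
    (hP : P.Pairwise fun l₁ l₂ => ∀ v ∈ l₁, v ∉ l₂)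
    {C : List α} (hC : C ∈ P) {s : ℕ} (hs : s < P.length) {v : α}
    (hv : v ∈ C) (hvs : v ∈ P[s]) : C = P[s] := by
  obtain ⟨t, ht, rfl⟩ := List.mem_iff_getElem.mp hC
  by_cases hst : t = s
  · subst hst; rfl
  · exact absurd hvs (fun h => packing_not_mem_two hP ht hs hst hv h)

lemma path_last_arc {G : α → α → Prop} {l : List α} (hp : IsPath G l) {v : α}
    (hv : l.getLast? = some v) :
    ∃ u, (u, v) ∈ PathArcs l ∧ G u v ∧ (l.length = 2 → l.head? = some u) ∧
      (3 ≤ l.length → u ∈ l.tail.dropLast) := by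
  obtain ⟨hlen, _, _, harc⟩ := hp
  have hne : l ≠ [] := by intro h; rw [h] at hlen; simp at hlen
  have hlast : l.getLast hne = v := by
    rw [List.getLast?_eq_getLast hne] at hv
    exact Option.some_injective _ hv
  have hvel : v = l[l.length - 1]'(by omega) := by
    rw [← hlast, List.getLast_eq_getElem]
  have hidx : l.length - 2 + 1 < l.length := by omega
  set u := l[l.length - 2]'(by omega) with hu
  have harcmem : (u, v) ∈ PathArcs l := by
    have := mem_zip_tail l (l.length - 2) hidx
    have e : l.length - 2 + 1 = l.length - 1 := by omega
    rw [getElem_idx_congr e] at this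
    rw [hvel]
    exact this
  refine ⟨u, harcmem, harc _ harcmem, ?_, ?_⟩
  · intro h2
    have : u = l[0]'(by omega) := by
      rw [hu]; exact getElem_idx_congr (by omega) _
    rw [this, List.head?_eq_head hne]
    congr 1
    exact List.head_eq_getElem hne
  · intro h3
    have hlt : l.length - 3 < l.tail.dropLast.length := by
      rw [List.length_dropLast, List.length_tail]; omega
    have : l.tail.dropLast[l.length - 3]'hlt = u := by
      rw [List.getElem_dropLast, List.getElem_tail]
      rw [hu]
      exact (getElem_idx_congr (by omega) _).symm
    rw [← this]
    exact List.getElem_mem hlt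

end PackingAux

section RowCyc

variable {n : ℕ}

/-- The cycle on row `i` of `K*_n`. -/
def rowCyc (n : ℕ) (i : Fin n) : List (Fin n × Fin n) :=
  (List.finRange n).map (fun j => (i, j))

lemma rowCyc_length (i : Fin n) : (rowCyc n i).length = n := by simp [rowCyc]

lemma rowCyc_getElem (i : Fin n) (s : ℕ) (hs : s < (rowCyc n i).length) :
    (rowCyc n i)[s] = (i, ⟨s, rowCyc_length i ▸ hs⟩) := by
  simp [rowCyc, List.getElem_finRange]

lemma mem_rowCyc {i : Fin n} {v : Fin n × Fin n} : v ∈ rowCyc n i ↔ v.1 = i := by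
  constructor
  · intro hv
    simp only [rowCyc, List.mem_map] at hv
    obtain ⟨j, _, rfl⟩ := hv
    rfl
  · intro hv
    simp only [rowCyc, List.mem_map]
    exact ⟨v.2, List.mem_finRange _, by rw [← hv]⟩

lemma rowCyc_isCycle [NeZero n] (i : Fin n) : IsCycle (Kstar n) (rowCyc n i) := by
  have hpos : 0 < n := Nat.pos_of_ne_zero (NeZero.ne n)
  refine ⟨?_, ?_, ?_⟩
  · intro h
    have := rowCyc_length i
    rw [h] at this
    simp at this
    omega
  · exact List.Nodup.map (fun a b hab => congrArg Prod.snd hab) (List.nodup_finRange n)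
  · intro a ha
    obtain ⟨t, ht, rfl⟩ := cycArcs_spec ha
    rw [rowCyc_getElem, rowCyc_getElem]
    left
    refine ⟨rfl, ?_⟩
    show ((t + 1) % (rowCyc n i).length) = (t + 1) % n
    rw [rowCyc_length i]

/-- The packing of the `n` rows. -/
def rowPack (n : ℕ) : List (List (Fin n × Fin n)) :=
  (List.finRange n).map (rowCyc n)

lemma rowPack_isPacking [NeZero n] : IsPacking (Kstar n) (rowPack n) := by
  constructor
  · intro l hl
    simp only [rowPack, List.mem_map] at hl
    obtain ⟨j, _, rfl⟩ := hl
    exact rowCyc_isCycle j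
  · rw [List.pairwise_iff_getElem]
    intro s t hs ht hst v hv1 hv2
    simp only [rowPack, List.getElem_map, List.getElem_finRange] at hv1 hv2
    have e1 := mem_rowCyc.mp hv1
    have e2 := mem_rowCyc.mp hv2
    rw [e1] at e2
    have : s = t := by
      have := congrArg Fin.val e2
      simpa using this
    omega

lemma packing_length_le [NeZero n] {P : List (List (Fin n × Fin n))}
    (hP : IsPacking (Kstar n) P) : P.length ≤ n := by
  classical
  have hc : ∀ t : Fin P.length, ∃ i : Fin n, (i, i) ∈ P[(t : ℕ)] :=
    fun t => cyc_diag (hP.1 _ (List.getElem_mem t.2))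
  choose F hF using hc
  have hinj : Function.Injective F := by
    intro a b hab
    by_contra hne
    have hval : (a : ℕ) ≠ (b : ℕ) := fun h => hne (Fin.val_inj.mp h)
    exact packing_not_mem_two hP.2 a.2 b.2 hval (hF a) (hab ▸ hF b)
  have := Fintype.card_le_of_injective F hinj
  simpa using this

lemma nu_Kstar [NeZero n] : nu (Kstar n) = n := by
  have hmem : n ∈ {k | ∃ P, IsPacking (Kstar n) P ∧ P.length = k} :=
    ⟨rowPack n, rowPack_isPacking, by simp [rowPack]⟩
  have hbd : ∀ k ∈ {k | ∃ P, IsPacking (Kstar n) P ∧ P.length = k}, k ≤ n := by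
    rintro k ⟨P, hP, rfl⟩
    exact packing_length_le hP
  exact le_antisymm (csSup_le ⟨n, hmem⟩ hbd) (le_csSup ⟨n, hbd⟩ hmem)

lemma tau_Kstar [NeZero n] : tau (Kstar n) = n := by
  classical
  set diagF : Finset (Fin n × Fin n) := Finset.image (fun i : Fin n => (i, i)) Finset.univ
    with hdiagF
  have hfvs : IsFVS (Kstar n) diagF := by
    intro l hl
    obtain ⟨i, hi⟩ := cyc_diag hl
    exact ⟨(i, i), hi, Finset.mem_image_of_mem _ (Finset.mem_univ i)⟩
  have hcard : diagF.card = n := by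
    rw [hdiagF, Finset.card_image_of_injective _ (fun a b hab => congrArg Prod.fst hab)]
    simp
  have hmem : n ∈ {k | ∃ I : Finset (Fin n × Fin n), IsFVS (Kstar n) I ∧ I.card = k} :=
    ⟨diagF, hfvs, hcard⟩
  have hbd : ∀ k ∈ {k | ∃ I : Finset (Fin n × Fin n), IsFVS (Kstar n) I ∧ I.card = k},
      n ≤ k := by
    rintro k ⟨I, hI, rfl⟩
    have hc : ∀ i : Fin n, ∃ v : Fin n × Fin n, v ∈ rowCyc n i ∧ v ∈ I := by
      intro i
      obtain ⟨v, hv, hvI⟩ := hI _ (rowCyc_isCycle i)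
      exact ⟨v, hv, hvI⟩
    choose F hF1 hF2 using hc
    have hinj : Function.Injective (fun i => (⟨F i, hF2 i⟩ : {x // x ∈ I})) := by
      intro a b hab
      have : F a = F b := congrArg Subtype.val hab
      have e1 := mem_rowCyc.mp (hF1 a)
      have e2 := mem_rowCyc.mp (hF1 b)
      rw [← e1, ← e2, this]
    have := Fintype.card_le_of_injective _ hinj
    simpa using this
  exact le_antisymm (csInf_le (OrderBot.bddBelow _) hmem) (le_csInf ⟨n, hmem⟩ hbd)

lemma no_indep_Kstar [NeZero n] :
    ¬ ∃ C₁ C₂ : List (Fin n × Fin n),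
      IsCycle (Kstar n) C₁ ∧ IsCycle (Kstar n) C₂ ∧ Independent (Kstar n) C₁ C₂ := by
  rintro ⟨C₁, C₂, hc1, hc2, hind⟩
  obtain ⟨i, j, hij, hiC, hjiC, _⟩ := key_lemma hc1 hc2 hind.1
  exact (hind.2 _ hiC _ hjiC).1 (kstar_jump i j (Ne.symm hij))

end RowCyc



section NuStar

variable {n : ℕ}

lemma special_packing_le_one [NeZero n] {P : List (List (Fin n × Fin n))}
    (hP : IsSpecialPacking (Kstar n) P) : P.length ≤ 1 := by
  by_contra hlen
  push_neg at hlen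
  have h0 : 0 < P.length := by omega
  have h1 : 1 < P.length := by omega
  set C₁ := P[0] with hC1
  set C₂ := P[1] with hC2
  have hc1 : IsCycle (Kstar n) C₁ := hP.1.1 _ (List.getElem_mem h0)
  have hc2 : IsCycle (Kstar n) C₂ := hP.1.1 _ (List.getElem_mem h1)
  have hdisj : ∀ v ∈ C₁, v ∉ C₂ := by
    intro v hv1 hv2
    exact packing_not_mem_two hP.1.2 h0 h1 (by omega) hv1 hv2
  obtain ⟨i, j, hij, hiC, hjiC, harcC⟩ := key_lemma hc1 hc2 hdisj
  -- the principal path [(i,i),(j,i)] from C₁ to (j,i) ∈ C₂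
  have hpath : IsPath (Kstar n) [(i,i),(j,i)] := by
    refine ⟨by simp, by simp, by simp, ?_⟩
    intro a ha
    simp only [PathArcs, List.zip, List.tail_cons, List.zipWith, List.mem_singleton] at ha
    subst ha
    exact kstar_jump i j (Ne.symm hij)
  have hprin : IsPrincipal (Kstar n) P [(i,i),(j,i)] := by
    refine ⟨hpath, ?_, by simp⟩
    intro a ha C hC hmem
    simp only [PathArcs, List.zip, List.tail_cons, List.zipWith, List.mem_singleton] at ha
    subst ha
    have hfst : (i, i) ∈ C := cycArcs_fst_mem hmem
    have hsnd : (j, i) ∈ C := cycArcs_snd_mem hmem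
    have : C = C₁ := mem_eq_of_mem_packing hP.1.2 hC h0 hfst hiC
    rw [this] at hsnd
    exact hdisj _ hsnd hjiC
  have hpf : PrincipalFrom (Kstar n) P (fun u => u ∈ C₁) ((j, i)) :=
    ⟨[(i,i),(j,i)], hprin, ⟨(i,i), by simp, hiC⟩, by simp⟩
  have hC1ne : C₁ ≠ C₂ := by
    intro h
    exact hdisj _ (h ▸ hjiC) hjiC
  have hspec := hP.2 C₂ (List.getElem_mem h1) (j, i) hjiC
    ⟨C₁, List.getElem_mem h0, hC1ne, hpf⟩
  rcases hspec with ⟨l, hlp, ⟨u₀, hhead, hu₀⟩, hlast⟩ | ⟨l, _, ⟨u₀, _, hsrc⟩, _⟩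
  · obtain ⟨u, harcmem, hG, h2, h3⟩ := path_last_arc hlp.1 hlast
    rcases (kstar_char u ((j, i))).mp hG with hu | ⟨hu, _⟩
    · -- u = (j, i-1) : arc of C₂
      apply hlp.2.1 _ harcmem C₂ (List.getElem_mem h1)
      rw [hu]
      exact harcC
    · -- u = (i, i)
      simp only at hu
      rcases Nat.lt_or_ge l.length 3 with hl3 | hl3
      · have hl2 : l.length = 2 := by
          have := hlp.1.1
          omega
        have := h2 hl2
        rw [hhead] at this
        have heq : u₀ = u := Option.some_injective _ this
        rw [heq, hu] at hu₀
        exact hdisj _ hiC hu₀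
      · have hmem := h3 hl3
        rw [hu] at hmem
        exact hlp.2.2 _ (by simpa using hmem) C₁ (List.getElem_mem h0) hiC
  · exact kstar_no_source u₀ hsrc

lemma single_special [NeZero n] :
    IsSpecialPacking (Kstar n) [rowCyc n 0] := by
  constructor
  · constructor
    · intro l hl
      rw [List.mem_singleton] at hl
      rw [hl]
      exact rowCyc_isCycle 0
    · simp
  · intro Ci hCi v _ ⟨Cj, hCj, hne, _⟩
    rw [List.mem_singleton] at hCi hCj
    exact absurd (hCj.trans hCi.symm) hne

lemma nuStar_Kstar [NeZero n] : nuStar (Kstar n) = 1 := by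
  have hmem : 1 ∈ {k | ∃ P, IsSpecialPacking (Kstar n) P ∧ P.length = k} :=
    ⟨[rowCyc n 0], single_special, rfl⟩
  have hbd : ∀ k ∈ {k | ∃ P, IsSpecialPacking (Kstar n) P ∧ P.length = k}, k ≤ 1 := by
    rintro k ⟨P, hP, rfl⟩
    exact special_packing_le_one hP
  exact le_antisymm (csSup_le ⟨1, hmem⟩ hbd) (le_csSup ⟨1, hbd⟩ hmem)

end NuStar



section UpperBound

variable {n : ℕ} [NeZero n]

lemma depends_only {V : Type*} [Fintype V] [DecidableEq V]
    (f : (V → Bool) → V → Bool) (v : V) :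
    ∀ (x x' : V → Bool), (∀ u, Depends f u v → x u = x' u) → f x v = f x' v := by
  classical
  suffices H : ∀ (k : ℕ) (x x' : V → Bool),
      (Finset.univ.filter (fun u => x u ≠ x' u)).card = k →
      (∀ u, Depends f u v → x u = x' u) → f x v = f x' v by
    intro x x' h
    exact H _ x x' rfl h
  intro k
  induction k with
  | zero =>
    intro x x' hcard h
    have hxe : x = x' := by
      funext u
      by_contra hne
      have : u ∈ Finset.univ.filter (fun u => x u ≠ x' u) := by
        simp [hne]
      rw [Finset.card_eq_zero.mp hcard] at this
      simp at this
    rw [hxe]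
  | succ k ih =>
    intro x x' hcard h
    have hne : (Finset.univ.filter (fun u => x u ≠ x' u)).Nonempty := by
      rw [← Finset.card_pos, hcard]; omega
    obtain ⟨u, hu⟩ := hne
    have hxu : x u ≠ x' u := (Finset.mem_filter.mp hu).2
    have hnd : ¬ Depends f u v := fun hd => hxu (h u hd)
    set x'' := Function.update x u (x' u) with hx''
    have h1 : f x v = f x'' v := by
      by_contra hc
      exact hnd ⟨x, x'', fun w hw => (Function.update_of_ne hw _ _).symm, hc⟩
    rw [h1]
    apply ih x'' x' ?_ ?_
    · have hset : Finset.univ.filter (fun w => x'' w ≠ x' w) =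
        (Finset.univ.filter (fun w => x w ≠ x' w)).erase u := by
        ext w
        by_cases hw : w = u
        · subst hw
          simp [hx'', Function.update_self]
        · simp [hx'', Function.update_of_ne hw, hw]
      rw [hset, Finset.card_erase_of_mem hu, hcard]
      omega
    · intro w hw
      by_cases hwu : w = u
      · subst hwu
        simp [hx'', Function.update_self]
      · rw [hx'', Function.update_of_ne hwu]
        exact h w hw

/-- The local gate of `f` at vertex `(i,j)`. -/
def gate (f : (Fin n × Fin n → Bool) → Fin n × Fin n → Bool) (i j : Fin n) (a b : Bool) :
    Bool :=
  f (Function.update (Function.update (fun _ => false) (i, j - 1) a) (j, j) b) (i, j)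

/-- The gate is neutral at `b`. -/
def Ntr (f : (Fin n × Fin n → Bool) → Fin n × Fin n → Bool) (i j : Fin n) (b : Bool) : Prop :=
  ∀ a, gate f i j a b = a

/-- The gate forces `b`. -/
def Frc (f : (Fin n × Fin n → Bool) → Fin n × Fin n → Bool) (i j : Fin n) (b : Bool) : Prop :=
  ∀ a, gate f i j a b = b

variable {f : (Fin n × Fin n → Bool) → Fin n × Fin n → Bool}

lemma gate_eval (hIG : ∀ u v, Kstar n u v ↔ Depends f u v) {i j : Fin n} (hij : i ≠ j)
    (x : Fin n × Fin n → Bool) :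
    f x (i, j) = gate f i j (x (i, j - 1)) (x (j, j)) := by
  apply depends_only
  intro u hd
  have hk := (hIG u (i, j)).mpr hd
  rcases (kstar_char u (i, j)).mp hk with hu | ⟨hu, hne⟩
  · subst hu
    have hne2 : ((i : Fin n), j - 1) ≠ ((j : Fin n), j) := by
      intro hc
      exact hij (congrArg Prod.fst hc)
    rw [Function.update_of_ne hne2, Function.update_self]
  · simp only at hu
    subst hu
    rw [Function.update_self]

lemma diag_eval (hmono : Monotone f) (hIG : ∀ u v, Kstar n u v ↔ Depends f u v) (i : Fin n)
    (x : Fin n × Fin n → Bool) :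
    f x (i, i) = x (i, i - 1) := by
  classical
  set h : Bool → Bool := fun a => f (Function.update (fun _ => false) (i, i - 1) a) (i, i)
    with hh
  have heval : ∀ y : Fin n × Fin n → Bool, f y (i, i) = h (y (i, i - 1)) := by
    intro y
    apply depends_only
    intro u hd
    have hk := (hIG u (i, i)).mpr hd
    rcases (kstar_char u (i, i)).mp hk with hu | ⟨_, hne⟩
    · subst hu
      rw [Function.update_self]
    · exact absurd rfl hne
  have hdep : Depends f (i, i - 1) (i, i) := (hIG _ _).mp (kstar_pred (i, i))
  have hne : h false ≠ h true := by
    obtain ⟨y, y', hag, hfne⟩ := hdep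
    rw [heval y, heval y'] at hfne
    have hyne : y (i, i - 1) ≠ y' (i, i - 1) := by
      intro hc; rw [hc] at hfne; exact hfne rfl
    rcases Bool.eq_false_or_eq_true (y (i, i - 1)) with hb | hb <;>
      rcases Bool.eq_false_or_eq_true (y' (i, i - 1)) with hb' | hb' <;>
        rw [hb, hb'] at hfne hyne <;> first
          | exact absurd rfl hyne
          | exact hfne
          | exact fun hc => hfne hc.symm
  have hmle : h false ≤ h true := by
    apply hmono
    intro w
    by_cases hw : w = (i, i - 1)
    · subst hw; rw [Function.update_self, Function.update_self]; exact Bool.false_le _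
    · rw [Function.update_of_ne hw, Function.update_of_ne hw]
  have hid : ∀ a, h a = a := by
    have h0 : h false = false := by
      rcases Bool.eq_false_or_eq_true (h false) with h0 | h0
      · rw [h0] at hmle
        have h1 : h true = true := le_antisymm (Bool.le_true _) (h0 ▸ hmle)
        exact absurd (h0.trans h1.symm) hne
      · exact h0
    have h1 : h true = true := by
      rcases Bool.eq_false_or_eq_true (h true) with h1 | h1
      · exact h1
      · exact absurd (h0.trans h1.symm) hne
    intro a
    cases a
    · exact h0
    · exact h1
  rw [heval x, hid]

lemma gate_mono (hmono : Monotone f) {i j : Fin n} {a a' b b' : Bool}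
    (ha : a ≤ a') (hb : b ≤ b') : gate f i j a b ≤ gate f i j a' b' := by
  apply hmono
  intro w
  by_cases hw : w = (j, j)
  · subst hw; rw [Function.update_self, Function.update_self]; exact hb
  · rw [Function.update_of_ne hw, Function.update_of_ne hw]
    by_cases hw2 : w = (i, j - 1)
    · subst hw2; rw [Function.update_self, Function.update_self]; exact ha
    · rw [Function.update_of_ne hw2, Function.update_of_ne hw2]

lemma gate_dep_fst (hIG : ∀ u v, Kstar n u v ↔ Depends f u v) {i j : Fin n} (hij : i ≠ j) :
    ∃ c, gate f i j false c ≠ gate f i j true c := by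
  have hd : Depends f (i, j - 1) (i, j) := (hIG _ _).mp (kstar_pred (i, j))
  obtain ⟨y, y', hag, hfne⟩ := hd
  have hqq : (j, j) ≠ ((i : Fin n), j - 1) := fun hc => hij (congrArg Prod.fst hc).symm
  have hagq : y (j, j) = y' (j, j) := hag _ hqq
  rw [gate_eval hIG hij, gate_eval hIG hij, ← hagq] at hfne
  have hyne : y (i, j - 1) ≠ y' (i, j - 1) := by
    intro hc; rw [hc] at hfne; exact hfne rfl
  refine ⟨y (j, j), ?_⟩
  rcases Bool.eq_false_or_eq_true (y (i, j - 1)) with hb | hb <;>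
    rcases Bool.eq_false_or_eq_true (y' (i, j - 1)) with hb' | hb' <;>
      rw [hb, hb'] at hfne hyne <;> first
        | exact absurd rfl hyne
        | exact hfne
        | exact fun hc => hfne hc.symm

lemma gate_dep_snd (hIG : ∀ u v, Kstar n u v ↔ Depends f u v) {i j : Fin n} (hij : i ≠ j) :
    ∃ c, gate f i j c false ≠ gate f i j c true := by
  have hd : Depends f (j, j) (i, j) := (hIG _ _).mp (kstar_jump j i hij)
  obtain ⟨y, y', hag, hfne⟩ := hd
  have hqq : ((i : Fin n), j - 1) ≠ ((j : Fin n), j) := fun hc => hij (congrArg Prod.fst hc)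
  have hagq : y (i, j - 1) = y' (i, j - 1) := hag _ hqq
  rw [gate_eval hIG hij, gate_eval hIG hij, ← hagq] at hfne
  have hyne : y (j, j) ≠ y' (j, j) := by
    intro hc; rw [hc] at hfne; exact hfne rfl
  refine ⟨y (i, j - 1), ?_⟩
  rcases Bool.eq_false_or_eq_true (y (j, j)) with hb | hb <;>
    rcases Bool.eq_false_or_eq_true (y' (j, j)) with hb' | hb' <;>
      rw [hb, hb'] at hfne hyne <;> first
        | exact absurd rfl hyne
        | exact hfne
        | exact fun hc => hfne hc.symm

lemma gate_ff (hmono : Monotone f) (hIG : ∀ u v, Kstar n u v ↔ Depends f u v)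
    {i j : Fin n} (hij : i ≠ j) : gate f i j false false = false := by
  rcases Bool.eq_false_or_eq_true (gate f i j false false) with h | h
  · exfalso
    have hall : ∀ a b, gate f i j a b = true := by
      intro a b
      have := gate_mono (i := i) (j := j) hmono (Bool.false_le a) (Bool.false_le b)
      rw [h] at this
      exact le_antisymm (Bool.le_true _) this
    obtain ⟨c, hc⟩ := gate_dep_fst hIG hij
    rw [hall, hall] at hc
    exact hc rfl
  · exact h

lemma gate_tt (hmono : Monotone f) (hIG : ∀ u v, Kstar n u v ↔ Depends f u v)
    {i j : Fin n} (hij : i ≠ j) : gate f i j true true = true := by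
  rcases Bool.eq_false_or_eq_true (gate f i j true true) with h | h
  · exact h
  · exfalso
    have hall : ∀ a b, gate f i j a b = false := by
      intro a b
      have := gate_mono (i := i) (j := j) hmono (Bool.le_true a) (Bool.le_true b)
      rw [h] at this
      exact le_antisymm this (Bool.false_le _)
    obtain ⟨c, hc⟩ := gate_dep_fst hIG hij
    rw [hall, hall] at hc
    exact hc rfl

lemma gate_dich (hmono : Monotone f) (hIG : ∀ u v, Kstar n u v ↔ Depends f u v)
    {i j : Fin n} (hij : i ≠ j) (b : Bool) : Ntr f i j b ∨ Frc f i j b := by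
  have hff := gate_ff hmono hIG hij
  have htt := gate_tt hmono hIG hij
  cases b
  · rcases Bool.eq_false_or_eq_true (gate f i j true false) with h | h
    · left; intro a; cases a
      · exact hff
      · exact h
    · right; intro a; cases a
      · exact hff
      · exact h
  · rcases Bool.eq_false_or_eq_true (gate f i j false true) with h | h
    · right; intro a; cases a
      · exact h
      · exact htt
    · left; intro a; cases a
      · exact h
      · exact htt

lemma gate_not_both (hIG : ∀ u v, Kstar n u v ↔ Depends f u v)
    {i j : Fin n} (hij : i ≠ j) (h0 : Ntr f i j false) (h1 : Ntr f i j true) : False := by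
  obtain ⟨c, hc⟩ := gate_dep_snd hIG hij
  rw [h0 c, h1 c] at hc
  exact hc rfl

lemma ntr_frc_excl {i j : Fin n} {b : Bool} (hn : Ntr f i j b) (hf : Frc f i j b) : False := by
  have h1 := hn (!b)
  rw [hf (!b)] at h1
  cases b <;> simp at h1

end UpperBound



section FixedPoints

variable {n : ℕ} [NeZero n]

lemma add_dist (c j : Fin n) : c + (((j - c : Fin n) : ℕ) : Fin n) = j := by
  rw [Fin.cast_val_eq_self]; ring

lemma add_succ_sub_one (c : Fin n) (t : ℕ) :
    c + (((t+1) : ℕ) : Fin n) - 1 = c + ((t : ℕ) : Fin n) := by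
  push_cast; ring

lemma sub_ne_self {a : Fin n} {t : ℕ} (h1 : 1 ≤ t) (h2 : t < n) :
    a - ((t : ℕ) : Fin n) ≠ a := by
  intro h
  have h0 : ((t : ℕ) : Fin n) = 0 := by
    have := sub_eq_self.mp h
    exact this
  have hval := congrArg Fin.val h0
  rw [Fin.val_natCast] at hval
  rw [Nat.mod_eq_of_lt h2] at hval
  simp at hval
  omega

lemma bool_lt {u v : Bool} (h : u < v) : u = false ∧ v = true := by
  cases u <;> cases v <;> first
    | exact ⟨rfl, rfl⟩
    | exact absurd h (by decide)

variable {f : (Fin n × Fin n → Bool) → Fin n × Fin n → Bool}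

lemma fix_diag (hmono : Monotone f) (hIG : ∀ u v, Kstar n u v ↔ Depends f u v)
    {x : Fin n × Fin n → Bool} (hx : f x = x) (i : Fin n) :
    x (i, i) = x (i, i - 1) := by
  have := congrFun hx (i, i)
  rw [diag_eval hmono hIG] at this
  exact this.symm

lemma fix_gate (hIG : ∀ u v, Kstar n u v ↔ Depends f u v)
    {x : Fin n × Fin n → Bool} (hx : f x = x) {i j : Fin n} (hij : i ≠ j) :
    x (i, j) = gate f i j (x (i, j - 1)) (x (j, j)) := by
  have := congrFun hx (i, j)
  rw [gate_eval hIG hij] at this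
  exact this.symm

lemma row_const (hmono : Monotone f) (hIG : ∀ u v, Kstar n u v ↔ Depends f u v)
    {z : Fin n × Fin n → Bool} (hz : f z = z) (i : Fin n)
    (hall : ∀ c, c ≠ i → Ntr f i c (z (c, c))) : ∀ j, z (i, j) = z (i, i) := by
  have W : ∀ t : ℕ, z (i, i - ((t : ℕ) : Fin n)) = z (i, i) := by
    intro t
    induction t with
    | zero => norm_num
    | succ t ih =>
      by_cases hc : i - ((t : ℕ) : Fin n) = i
      · have e : i - (((t+1) : ℕ) : Fin n) = i - 1 := by rw [← sub_nat_succ, hc]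
        rw [e]
        exact (fix_diag hmono hIG hz i).symm
      · have hNs := hall _ hc
        have hic : i ≠ i - ((t : ℕ) : Fin n) := fun h => hc h.symm
        rw [← sub_nat_succ]
        calc z (i, i - ((t : ℕ) : Fin n) - 1)
            = gate f i (i - ((t : ℕ) : Fin n)) (z (i, i - ((t : ℕ) : Fin n) - 1))
              (z (i - ((t : ℕ) : Fin n), i - ((t : ℕ) : Fin n))) := (hNs _).symm
          _ = z (i, i - ((t : ℕ) : Fin n)) := (fix_gate hIG hz hic).symm
          _ = z (i, i) := ih
  intro j
  have := W ((i - j : Fin n) : ℕ)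
  rwa [sub_dist] at this

lemma diag_det (hmono : Monotone f) (hIG : ∀ u v, Kstar n u v ↔ Depends f u v)
    {x x' : Fin n × Fin n → Bool} (hx : f x = x) (hx' : f x' = x')
    (hy : ∀ i, x (i, i) = x' (i, i)) : x = x' := by
  funext v
  obtain ⟨i, j⟩ := v
  by_cases hall : ∀ c, c ≠ i → Ntr f i c (x (c, c))
  · have hall' : ∀ c, c ≠ i → Ntr f i c (x' (c, c)) := fun c hc => (hy c) ▸ hall c hc
    rw [row_const hmono hIG hx i hall j, row_const hmono hIG hx' i hall' j, hy i]
  · push_neg at hall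
    obtain ⟨c, hci, hcn⟩ := hall
    have hic : i ≠ c := fun h => hci h.symm
    have hfrc : Frc f i c (x (c, c)) := (gate_dich hmono hIG hic _).resolve_left hcn
    have hfrc' : Frc f i c (x' (c, c)) := (hy c) ▸ hfrc
    have base : x (i, c) = x' (i, c) := by
      rw [fix_gate hIG hx hic, fix_gate hIG hx' hic, hfrc _, hfrc' _, hy c]
    have F : ∀ t : ℕ, x (i, c + ((t : ℕ) : Fin n)) = x' (i, c + ((t : ℕ) : Fin n)) := by
      intro t
      induction t with
      | zero => simpa using base
      | succ t ih =>
        by_cases hwi : c + (((t+1) : ℕ) : Fin n) = i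
        · rw [hwi]; exact hy i
        · have hiw : i ≠ c + (((t+1) : ℕ) : Fin n) := fun h => hwi h.symm
          rw [fix_gate hIG hx hiw, fix_gate hIG hx' hiw, add_succ_sub_one, ih,
            hy (c + (((t+1) : ℕ) : Fin n))]
    have := F ((j - c : Fin n) : ℕ)
    rwa [add_dist] at this

lemma chain_step (hmono : Monotone f) (hIG : ∀ u v, Kstar n u v ↔ Depends f u v)
    {x x' : Fin n × Fin n → Bool} (hx : f x = x) (hx' : f x' = x') {a b₀ : Fin n}
    (ha1 : x (a, a) = true) (ha2 : x' (a, a) = false)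
    (hb1 : x (b₀, b₀) = false) (hb2 : x' (b₀, b₀) = true) :
    ∃ k : Fin n, x (k, k) = true ∧ x' (k, k) = false ∧
      ((k - b₀ : Fin n) : ℕ) < ((a - b₀ : Fin n) : ℕ) := by
  classical
  have hab : a ≠ b₀ := by
    intro h
    rw [h, hb1] at ha1
    exact absurd ha1 (by decide)
  set t₀ := ((a - b₀ : Fin n) : ℕ) with ht₀def
  have ht₀1 : 1 ≤ t₀ := by
    rcases Nat.eq_zero_or_pos t₀ with h | h
    · exact absurd ((sub_val_eq_zero_iff a b₀).mp h) hab
    · exact h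
  have ht₀n : t₀ < n := (a - b₀).isLt
  have hsub : a - ((t₀ : ℕ) : Fin n) = b₀ := sub_dist a b₀
  have hQt₀ : ¬(Ntr f a (a - ((t₀ : ℕ) : Fin n)) (x (a - ((t₀ : ℕ) : Fin n), a - ((t₀ : ℕ) : Fin n))) ∧
        Ntr f a (a - ((t₀ : ℕ) : Fin n)) (x' (a - ((t₀ : ℕ) : Fin n), a - ((t₀ : ℕ) : Fin n)))) := by
    rw [hsub]
    rintro ⟨hN1, hN2⟩
    rw [hb1] at hN1
    rw [hb2] at hN2
    exact gate_not_both hIG hab hN1 hN2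
  have hexists : ∃ t : ℕ, 1 ≤ t ∧
      ¬(Ntr f a (a - ((t : ℕ) : Fin n)) (x (a - ((t : ℕ) : Fin n), a - ((t : ℕ) : Fin n))) ∧
        Ntr f a (a - ((t : ℕ) : Fin n)) (x' (a - ((t : ℕ) : Fin n), a - ((t : ℕ) : Fin n)))) :=
    ⟨t₀, ht₀1, hQt₀⟩
  set tstar := Nat.find hexists with htsdef
  obtain ⟨h1t, hnb⟩ := Nat.find_spec hexists
  have htle : tstar ≤ t₀ := Nat.find_min' hexists ⟨ht₀1, hQt₀⟩
  set k := a - ((tstar : ℕ) : Fin n) with hkdef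
  have hkne : k ≠ a := sub_ne_self h1t (by omega)
  have hak : a ≠ k := Ne.symm hkne
  have hbothNtr : ∀ s, 1 ≤ s → s < tstar →
      Ntr f a (a - ((s : ℕ) : Fin n)) (x (a - ((s : ℕ) : Fin n), a - ((s : ℕ) : Fin n))) ∧
      Ntr f a (a - ((s : ℕ) : Fin n)) (x' (a - ((s : ℕ) : Fin n), a - ((s : ℕ) : Fin n))) := by
    intro s h1 h2
    have hmin := Nat.find_min hexists h2
    push_neg at hmin
    exact hmin h1
  have W : ∀ (z : Fin n × Fin n → Bool), f z = z →
      (∀ s, 1 ≤ s → s < tstar →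
        Ntr f a (a - ((s : ℕ) : Fin n)) (z (a - ((s : ℕ) : Fin n), a - ((s : ℕ) : Fin n)))) →
      ∀ s, s ≤ tstar → z (a, a - ((s : ℕ) : Fin n)) = z (a, a) := by
    intro z hz hN s
    induction s with
    | zero => intro _; norm_num
    | succ s ih =>
      intro hs
      have hss : s ≤ tstar := by omega
      have hstep : z (a, a - (((s+1) : ℕ) : Fin n)) = z (a, a - ((s : ℕ) : Fin n)) := by
        rcases Nat.eq_zero_or_pos s with rfl | hpos
        · have e1 : (((0+1) : ℕ) : Fin n) = 1 := by norm_num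
          have e0 : ((0 : ℕ) : Fin n) = 0 := by norm_num
          rw [e1, e0, sub_zero]
          exact (fix_diag hmono hIG hz a).symm
        · have hslt : s < tstar := by omega
          have hNs := hN s hpos hslt
          have hsn : s < n := by omega
          have hcne : a - ((s : ℕ) : Fin n) ≠ a := sub_ne_self hpos hsn
          have hac : a ≠ a - ((s : ℕ) : Fin n) := Ne.symm hcne
          rw [← sub_nat_succ]
          calc z (a, a - ((s : ℕ) : Fin n) - 1)
              = gate f a (a - ((s : ℕ) : Fin n)) (z (a, a - ((s : ℕ) : Fin n) - 1))
                (z (a - ((s : ℕ) : Fin n), a - ((s : ℕ) : Fin n))) := (hNs _).symm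
            _ = z (a, a - ((s : ℕ) : Fin n)) := (fix_gate hIG hz hac).symm
      rw [hstep]
      exact ih hss
  have hWx : x (a, k) = x (a, a) :=
    W x hx (fun s h1 h2 => (hbothNtr s h1 h2).1) tstar (le_refl _)
  have hWx' : x' (a, k) = x' (a, a) :=
    W x' hx' (fun s h1 h2 => (hbothNtr s h1 h2).2) tstar (le_refl _)
  have hxak : x (a, k) = gate f a k (x (a, k - 1)) (x (k, k)) := fix_gate hIG hx hak
  have hx'ak : x' (a, k) = gate f a k (x' (a, k - 1)) (x' (k, k)) := fix_gate hIG hx' hak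
  have hvals : x (k, k) = true ∧ x' (k, k) = false := by
    by_cases hNx : Ntr f a k (x (k, k))
    · have hNx' : ¬ Ntr f a k (x' (k, k)) := fun h => hnb ⟨hNx, h⟩
      have hFx' : Frc f a k (x' (k, k)) := (gate_dich hmono hIG hak _).resolve_left hNx'
      have hx'kk : x' (k, k) = false := by
        have : x' (a, k) = x' (k, k) := by rw [hx'ak, hFx' _]
        rw [← this, hWx', ha2]
      have hvne : x (k, k) ≠ x' (k, k) := by
        intro h
        exact ntr_frc_excl (h ▸ hNx) hFx'
      refine ⟨?_, hx'kk⟩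
      rw [hx'kk] at hvne
      rcases Bool.eq_false_or_eq_true (x (k, k)) with h | h
      · exact h
      · exact absurd h hvne
    · have hFx : Frc f a k (x (k, k)) := (gate_dich hmono hIG hak _).resolve_left hNx
      have hxkk : x (k, k) = true := by
        have : x (a, k) = x (k, k) := by rw [hxak, hFx _]
        rw [← this, hWx, ha1]
      refine ⟨hxkk, ?_⟩
      by_cases hNx' : Ntr f a k (x' (k, k))
      · have hvne : x' (k, k) ≠ x (k, k) := by
          intro h
          exact ntr_frc_excl (h ▸ hNx') hFx
        rw [hxkk] at hvne
        rcases Bool.eq_false_or_eq_true (x' (k, k)) with h | h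
        · exact absurd h hvne
        · exact h
      · have hFx' : Frc f a k (x' (k, k)) := (gate_dich hmono hIG hak _).resolve_left hNx'
        have : x' (a, k) = x' (k, k) := by rw [hx'ak, hFx' _]
        rw [← this, hWx', ha2]
  have hdist : ((k - b₀ : Fin n) : ℕ) = t₀ - tstar := by
    have e : (k - b₀ : Fin n) = (a - b₀) - ((tstar : ℕ) : Fin n) := by
      rw [hkdef]; ring
    rw [e, val_sub_nat (a - b₀) tstar (by rw [← ht₀def]; omega)]
  exact ⟨k, hvals.1, hvals.2, by omega⟩

lemma diag_comparable (hmono : Monotone f) (hIG : ∀ u v, Kstar n u v ↔ Depends f u v)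
    {x x' : Fin n × Fin n → Bool} (hx : f x = x) (hx' : f x' = x') :
    (∀ i, x (i, i) ≤ x' (i, i)) ∨ (∀ i, x' (i, i) ≤ x (i, i)) := by
  by_contra hcon
  push_neg at hcon
  obtain ⟨⟨a₀, ha₀⟩, ⟨b₀, hb₀⟩⟩ := hcon
  obtain ⟨hA2, hA1⟩ := bool_lt ha₀
  obtain ⟨hB1, hB2⟩ := bool_lt hb₀
  have main : ∀ t, ∀ a : Fin n, x (a, a) = true → x' (a, a) = false →
      ((a - b₀ : Fin n) : ℕ) = t → False := by
    intro t
    induction t using Nat.strong_induction_on with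
    | _ t ih =>
      intro a h1 h2 h3
      obtain ⟨k, hk1, hk2, hk3⟩ := chain_step hmono hIG hx hx' h1 h2 hB1 hB2
      exact ih _ (h3 ▸ hk3) k hk1 hk2 rfl
  exact main _ a₀ hA1 hA2 rfl

lemma upper_bound (hmono : Monotone f) (hIG : ∀ u v, Kstar n u v ↔ Depends f u v) :
    Set.ncard {x : Fin n × Fin n → Bool | f x = x} ≤ n + 1 := by
  classical
  set S := {x : Fin n × Fin n → Bool | f x = x} with hS
  set w : (Fin n × Fin n → Bool) → ℕ :=
    fun x => (Finset.univ.filter fun i : Fin n => x (i, i) = true).card with hw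
  have hinj : Set.InjOn w S := by
    intro x hx x' hx' hww
    have hcomp := diag_comparable hmono hIG hx hx'
    have key : ∀ (u u' : Fin n × Fin n → Bool), f u = u → f u' = u' →
        (∀ i, u (i, i) ≤ u' (i, i)) → w u = w u' → u = u' := by
      intro u u' hu hu' hle hwe
      have hsub : (Finset.univ.filter fun i : Fin n => u (i, i) = true) ⊆
          (Finset.univ.filter fun i : Fin n => u' (i, i) = true) := by
        intro i hi
        simp only [Finset.mem_filter, Finset.mem_univ, true_and] at hi ⊢
        have := hle i
        rw [hi] at this
        rcases Bool.eq_false_or_eq_true (u' (i, i)) with h | h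
        · exact h
        · rw [h] at this; exact absurd this (by decide)
      have heq := Finset.eq_of_subset_of_card_le hsub (le_of_eq hwe.symm)
      apply diag_det hmono hIG hu hu'
      intro i
      have : i ∈ (Finset.univ.filter fun i : Fin n => u (i, i) = true) ↔
          i ∈ (Finset.univ.filter fun i : Fin n => u' (i, i) = true) := by rw [heq]
      simp only [Finset.mem_filter, Finset.mem_univ, true_and] at this
      by_cases hu : u (i, i) = true
      · rw [hu]; exact (this.mp hu).symm
      · have hu' : ¬ u' (i, i) = true := fun h => hu (this.mpr h)
        rw [Bool.not_eq_true] at hu hu'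
        rw [hu, hu']
    rcases hcomp with h | h
    · exact key x x' hx hx' h hww
    · exact (key x' x hx' hx h hww.symm).symm
  have himg : w '' S ⊆ ↑(Finset.range (n + 1)) := by
    rintro _ ⟨x, _, rfl⟩
    simp only [Finset.coe_range, Set.mem_Iio]
    have h1 : w x ≤ n := by
      rw [hw]
      calc (Finset.univ.filter fun i : Fin n => x (i, i) = true).card
          ≤ (Finset.univ : Finset (Fin n)).card := Finset.card_filter_le _ _
        _ = n := by simp
    omega
  calc S.ncard = (w '' S).ncard := (Set.ncard_image_of_injOn hinj).symm
    _ ≤ (↑(Finset.range (n + 1)) : Set ℕ).ncard :=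
        Set.ncard_le_ncard himg (Finset.finite_toSet _)
    _ = n + 1 := by rw [Set.ncard_coe_finset, Finset.card_range]

end FixedPoints



section LowerBound

variable {n : ℕ} [NeZero n]

lemma bool_or_mono : ∀ {a a' b b' : Bool}, a ≤ a' → b ≤ b' → (a || b) ≤ (a' || b') := by
  decide

lemma bool_and_mono : ∀ {a a' b b' : Bool}, a ≤ a' → b ≤ b' → (a && b) ≤ (a' && b') := by
  decide

lemma update_agree {V : Type*} [DecidableEq V] (x : V → Bool) (u : V) (b : Bool) :
    ∀ w, w ≠ u → x w = Function.update x u b w :=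
  fun w hw => (Function.update_of_ne hw b x).symm

/-- The example network on `K*_n` with `n+1` fixed points. -/
def exNet (n : ℕ) [NeZero n] : (Fin n × Fin n → Bool) → Fin n × Fin n → Bool :=
  fun x v =>
    if v.1 = v.2 then x (v.1, v.2 - 1)
    else if (v.1 : ℕ) < (v.2 : ℕ) then x (v.1, v.2 - 1) || x (v.2, v.2)
    else x (v.1, v.2 - 1) && x (v.2, v.2)

lemma exNet_mono : Monotone (exNet n) := by
  intro x y hxy v
  unfold exNet
  split_ifs
  · exact hxy _
  · exact bool_or_mono (hxy _) (hxy _)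
  · exact bool_and_mono (hxy _) (hxy _)

lemma exNet_IG : ∀ u v, Kstar n u v ↔ Depends (exNet n) u v := by
  intro u v
  constructor
  · intro hk
    rcases (kstar_char u v).mp hk with hu | ⟨hu, hne⟩
    · -- u = (v.1, v.2 - 1)
      subst hu
      by_cases hd : v.1 = v.2
      · refine ⟨(fun _ => false), Function.update (fun _ => false) (v.1, v.2 - 1) true,
          update_agree _ _ _, ?_⟩
        simp only [exNet, if_pos hd, Function.update_self]
        decide
      · rcases Nat.lt_or_ge (v.1 : ℕ) (v.2 : ℕ) with hlt | hge
        · refine ⟨(fun _ => false), Function.update (fun _ => false) (v.1, v.2 - 1) true,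
            update_agree _ _ _, ?_⟩
          have hne2 : ((v.2 : Fin n), (v.2 : Fin n)) ≠ ((v.1 : Fin n), v.2 - 1) :=
            fun hc => hd (congrArg Prod.fst hc).symm
          simp only [exNet, if_neg hd, if_pos hlt, Function.update_self,
            Function.update_of_ne hne2]
          decide
        · refine ⟨(fun _ => true), Function.update (fun _ => true) (v.1, v.2 - 1) false,
            update_agree _ _ _, ?_⟩
          have hne2 : ((v.2 : Fin n), (v.2 : Fin n)) ≠ ((v.1 : Fin n), v.2 - 1) :=
            fun hc => hd (congrArg Prod.fst hc).symm
          have hnlt : ¬ (v.1 : ℕ) < (v.2 : ℕ) := by omega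
          simp only [exNet, if_neg hd, if_neg hnlt, Function.update_self,
            Function.update_of_ne hne2]
          decide
    · -- u = (v.2, v.2), v.1 ≠ v.2
      subst hu
      have hne2 : ((v.1 : Fin n), v.2 - 1) ≠ ((v.2 : Fin n), v.2) :=
        fun hc => hne (congrArg Prod.fst hc)
      rcases Nat.lt_or_ge (v.1 : ℕ) (v.2 : ℕ) with hlt | hge
      · refine ⟨(fun _ => false), Function.update (fun _ => false) (v.2, v.2) true,
          update_agree _ _ _, ?_⟩
        simp only [exNet, if_neg hne, if_pos hlt, Function.update_self,
          Function.update_of_ne hne2]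
        decide
      · have hnlt : ¬ (v.1 : ℕ) < (v.2 : ℕ) := by omega
        refine ⟨(fun _ => true), Function.update (fun _ => true) (v.2, v.2) false,
          update_agree _ _ _, ?_⟩
        simp only [exNet, if_neg hne, if_neg hnlt, Function.update_self,
          Function.update_of_ne hne2]
        decide
  · intro hd
    by_contra hk
    obtain ⟨x, y, hag, hfne⟩ := hd
    apply hfne
    have hu1 : u ≠ (v.1, v.2 - 1) := by
      intro h
      exact hk (h ▸ kstar_pred v)
    have hx1 : x (v.1, v.2 - 1) = y (v.1, v.2 - 1) := hag _ (Ne.symm hu1)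
    by_cases hdg : v.1 = v.2
    · simp only [exNet, if_pos hdg, hx1]
    · have hu2 : u ≠ (v.2, v.2) := by
        intro h
        exact hk (h ▸ kstar_jump v.2 v.1 hdg)
      have hx2 : x (v.2, v.2) = y (v.2, v.2) := hag _ (Ne.symm hu2)
      simp only [exNet, if_neg hdg, hx1, hx2]

/-- The `n+1` fixed points of `exNet`. -/
def xk (n : ℕ) (k : ℕ) : Fin n × Fin n → Bool := fun v => decide ((v.1 : ℕ) < k)

lemma xk_fixed (k : ℕ) : exNet n (xk n k) = xk n k := by
  funext v
  obtain ⟨i, j⟩ := v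
  show exNet n (xk n k) (i, j) = decide ((i : ℕ) < k)
  by_cases hd : i = j
  · simp only [exNet, if_pos hd, xk]
  · rcases Nat.lt_or_ge (i : ℕ) (j : ℕ) with hlt | hge
    · simp only [exNet, if_neg hd, if_pos hlt, xk]
      by_cases hj : (j : ℕ) < k
      · have hi : (i : ℕ) < k := by omega
        simp [hi, hj]
      · simp [hj]
    · have hji : (j : ℕ) < (i : ℕ) := by
        rcases Nat.lt_or_ge (j : ℕ) (i : ℕ) with h | h
        · exact h
        · exact absurd (Fin.val_inj.mp (by omega)) hd
      have hnlt : ¬ (i : ℕ) < (j : ℕ) := by omega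
      simp only [exNet, if_neg hd, if_neg hnlt, xk]
      by_cases hi : (i : ℕ) < k
      · have hj : (j : ℕ) < k := by omega
        simp [hi, hj]
      · simp [hi]

end LowerBound



section LowerBound2

variable {n : ℕ} [NeZero n]

lemma fin_succ_sub_one {m : ℕ} (h : m + 1 < n) :
    (⟨m + 1, h⟩ : Fin n) - 1 = ⟨m, by omega⟩ := by
  apply Fin.val_inj.mp
  have e1 : (1 : Fin n) = ((1 : ℕ) : Fin n) := by norm_num
  rw [e1, val_sub_nat (⟨m + 1, h⟩ : Fin n) 1 (by simp)]
  simp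

lemma fin_zero_sub_one (h : 0 < n) :
    (⟨0, h⟩ : Fin n) - 1 = ⟨n - 1, by omega⟩ := by
  apply Fin.val_inj.mp
  rw [Fin.sub_def]
  simp only [Fin.val_one']
  show (n - 1 % n + 0) % n = n - 1
  rcases Nat.lt_or_ge n 2 with h2 | h2
  · have : n = 1 := by omega
    subst this
    rfl
  · have h1 : 1 % n = 1 := Nat.mod_eq_of_lt (by omega)
    rw [h1]
    rw [Nat.add_zero, Nat.mod_eq_of_lt (by omega)]

variable {x : Fin n × Fin n → Bool}

lemma exNet_diag_eq (hx : exNet n x = x) (i : Fin n) : x (i, i) = x (i, i - 1) := by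
  have h := congrFun hx (i, i)
  simp only [exNet, if_pos rfl] at h
  exact h.symm

lemma exNet_or_eq (hx : exNet n x = x) {i j : Fin n} (hij : (i : ℕ) < (j : ℕ)) :
    x (i, j) = (x (i, j - 1) || x (j, j)) := by
  have hd : i ≠ j := fun h => by rw [h] at hij; omega
  have h := congrFun hx (i, j)
  simp only [exNet, if_neg hd, if_pos hij] at h
  exact h.symm

lemma exNet_and_eq (hx : exNet n x = x) {i j : Fin n} (hij : (j : ℕ) < (i : ℕ)) :
    x (i, j) = (x (i, j - 1) && x (j, j)) := by
  have hd : i ≠ j := fun h => by rw [h] at hij; omega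
  have hnlt : ¬ (i : ℕ) < (j : ℕ) := by omega
  have h := congrFun hx (i, j)
  simp only [exNet, if_neg hd, if_neg hnlt] at h
  exact h.symm

lemma exNet_adj (hx : exNet n x = x) (m : ℕ) (h : m + 1 < n)
    (ht : x (⟨m + 1, h⟩, ⟨m + 1, h⟩) = true) : x (⟨m, by omega⟩, ⟨m, by omega⟩) = true := by
  set i : Fin n := ⟨m + 1, h⟩ with hi
  have h1 : x (i, i) = x (i, i - 1) := exNet_diag_eq hx i
  have hsub : i - 1 = (⟨m, by omega⟩ : Fin n) := fin_succ_sub_one h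
  have h2 : x (i, i - 1) = (x (i, (i - 1) - 1) && x (i - 1, i - 1)) := by
    rw [hsub]
    exact exNet_and_eq hx (by simp [hi])
  rw [h1, h2] at ht
  have := (Bool.and_eq_true _ _).mp ht
  rw [hsub] at this
  exact this.2

lemma exNet_closure (hx : exNet n x = x) :
    ∀ (a : ℕ) (ha : a < n) (b : ℕ) (hb : b < n), b ≤ a →
      x (⟨a, ha⟩, ⟨a, ha⟩) = true → x (⟨b, hb⟩, ⟨b, hb⟩) = true := by
  intro a
  induction a with
  | zero =>
    intro ha b hb hba ht
    have : b = 0 := by omega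
    subst this
    exact ht
  | succ a ih =>
    intro ha b hb hba ht
    by_cases hbe : b = a + 1
    · subst hbe; exact ht
    · exact ih (by omega) b hb (by omega) (exNet_adj hx a ha ht)

lemma exNet_phase1 (hx : exNet n x = x) (i : Fin n) :
    ∀ (m : ℕ) (hm : m < n), (i : ℕ) ≤ m → x (i, ⟨m, hm⟩) = x (i, i) := by
  intro m
  induction m with
  | zero =>
    intro hm h0
    have : i = ⟨0, hm⟩ := Fin.val_inj.mp ((by omega : (i : ℕ) = 0))
    rw [← this]
  | succ m ih =>
    intro hm hle
    by_cases he : (i : ℕ) = m + 1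
    · have : i = ⟨m + 1, hm⟩ := Fin.val_inj.mp ((by omega : (i : ℕ) = m + 1))
      rw [← this]
    · have hlt : (i : ℕ) < m + 1 := by omega
      have hor := exNet_or_eq hx (i := i) (j := ⟨m + 1, hm⟩) hlt
      rw [fin_succ_sub_one hm] at hor
      rw [hor, ih (by omega) (by omega)]
      rcases Bool.eq_false_or_eq_true (x (i, i)) with h1 | h1
      · -- x (i,i) = true
        rw [h1]; simp
      · -- x (i,i) = false
        rw [h1]
        have h2 : x (⟨m + 1, hm⟩, ⟨m + 1, hm⟩) = false := by
          rcases Bool.eq_false_or_eq_true (x (⟨m + 1, hm⟩, ⟨m + 1, hm⟩)) with h2 | h2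
          · have := exNet_closure hx (m + 1) hm (i : ℕ) i.isLt (by omega) h2
            rw [show (⟨(i : ℕ), i.isLt⟩ : Fin n) = i from Fin.eta i i.isLt] at this
            rw [this] at h1
            exact absurd h1 (by decide)
          · exact h2
        rw [h2]
        simp
  
lemma exNet_phase2 (hx : exNet n x = x) (i : Fin n) :
    ∀ (m : ℕ) (hm : m < n), m < (i : ℕ) → x (i, ⟨m, hm⟩) = x (i, i) := by
  intro m
  induction m with
  | zero =>
    intro hm h0
    have hand := exNet_and_eq hx (i := i) (j := ⟨0, hm⟩) (by simpa using h0)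
    rw [fin_zero_sub_one hm] at hand
    have hp1 := exNet_phase1 hx i (n - 1) (by omega) (by omega)
    rw [hand, hp1]
    rcases Bool.eq_false_or_eq_true (x (i, i)) with h1 | h1
    · rw [h1]
      have h2 : x (⟨0, hm⟩, ⟨0, hm⟩) = true := by
        have := exNet_closure hx (i : ℕ) i.isLt 0 hm (by omega)
        rw [Fin.eta i i.isLt] at this
        exact this h1
      rw [h2]
      simp
    · rw [h1]; simp
  | succ m ih =>
    intro hm hlt
    have hand := exNet_and_eq hx (i := i) (j := ⟨m + 1, hm⟩) hlt
    rw [fin_succ_sub_one hm] at hand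
    rw [hand, ih (by omega) (by omega)]
    rcases Bool.eq_false_or_eq_true (x (i, i)) with h1 | h1
    · rw [h1]
      have h2 : x (⟨m + 1, hm⟩, ⟨m + 1, hm⟩) = true := by
        have := exNet_closure hx (i : ℕ) i.isLt (m + 1) hm (by omega)
        rw [Fin.eta i i.isLt] at this
        exact this h1
      rw [h2]
      simp
    · rw [h1]; simp

lemma exNet_row_const (hx : exNet n x = x) (i j : Fin n) : x (i, j) = x (i, i) := by
  rcases Nat.lt_or_ge ((j : ℕ)) ((i : ℕ)) with h | h
  · have := exNet_phase2 hx i (j : ℕ) j.isLt h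
    rwa [Fin.eta j j.isLt] at this
  · have := exNet_phase1 hx i (j : ℕ) j.isLt h
    rwa [Fin.eta j j.isLt] at this

lemma exNet_char (hx : exNet n x = x) (i : Fin n) :
    x (i, i) = true ↔ (i : ℕ) < (Finset.univ.filter fun c : Fin n => x (c, c) = true).card := by
  constructor
  · intro ht
    have hsub : Finset.Iic i ⊆ (Finset.univ.filter fun c : Fin n => x (c, c) = true) := by
      intro j hj
      rw [Finset.mem_Iic] at hj
      rw [Finset.mem_filter]
      refine ⟨Finset.mem_univ _, ?_⟩
      have := exNet_closure hx (i : ℕ) i.isLt (j : ℕ) j.isLt hj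
      rw [Fin.eta i i.isLt, Fin.eta j j.isLt] at this
      exact this ht
    have := Finset.card_le_card hsub
    rw [Fin.card_Iic] at this
    omega
  · intro hlt
    rcases Bool.eq_false_or_eq_true (x (i, i)) with h1 | h1
    · exact h1
    · exfalso
      have hsub : (Finset.univ.filter fun c : Fin n => x (c, c) = true) ⊆ Finset.Iio i := by
        intro j hj
        rw [Finset.mem_filter] at hj
        rw [Finset.mem_Iio]
        by_contra hge
        push_neg at hge
        have := exNet_closure hx (j : ℕ) j.isLt (i : ℕ) i.isLt hge
        rw [Fin.eta i i.isLt, Fin.eta j j.isLt] at this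
        rw [this hj.2] at h1
        exact absurd h1 (by decide)
      have := Finset.card_le_card hsub
      rw [Fin.card_Iio] at this
      omega

lemma exNet_fixed_eq (hx : exNet n x = x) :
    x = xk n (Finset.univ.filter fun c : Fin n => x (c, c) = true).card := by
  funext v
  obtain ⟨i, j⟩ := v
  rw [xk]
  show x (i, j) = decide ((i : ℕ) < _)
  rw [exNet_row_const hx i j]
  rcases Bool.eq_false_or_eq_true (x (i, i)) with h1 | h1
  · rw [h1]
    have := (exNet_char hx i).mp h1
    simp [this]
  · rw [h1]
    have : ¬ ((i : ℕ) < (Finset.univ.filter fun c : Fin n => x (c, c) = true).card) :=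
      fun hc => by rw [(exNet_char hx i).mpr hc] at h1; exact absurd h1 (by decide)
    simp [this]

lemma exNet_count : Set.ncard {x : Fin n × Fin n → Bool | exNet n x = x} = n + 1 := by
  classical
  have hset : {x : Fin n × Fin n → Bool | exNet n x = x} =
      ↑((Finset.range (n + 1)).image (fun k => xk n k)) := by
    ext x
    simp only [Set.mem_setOf_eq, Finset.coe_image, Set.mem_image, Finset.mem_coe,
      Finset.mem_range]
    constructor
    · intro hx
      refine ⟨(Finset.univ.filter fun c : Fin n => x (c, c) = true).card, ?_, ?_⟩
      · have : (Finset.univ.filter fun c : Fin n => x (c, c) = true).card ≤ n := by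
          calc (Finset.univ.filter fun c : Fin n => x (c, c) = true).card
              ≤ (Finset.univ : Finset (Fin n)).card := Finset.card_filter_le _ _
            _ = n := by simp
        omega
      · exact (exNet_fixed_eq hx).symm
    · rintro ⟨k, _, rfl⟩
      exact xk_fixed k
  rw [hset, Set.ncard_coe_finset]
  have hinj : Set.InjOn (fun k => xk n k) ↑(Finset.range (n + 1)) := by
    have key : ∀ k1 k2 : ℕ, k1 < k2 → k2 ≤ n → xk n k1 ≠ xk n k2 := by
      intro k1 k2 hlt hle heq
      have hk1n : k1 < n := by omega
      have := congrFun heq (⟨k1, hk1n⟩, ⟨k1, hk1n⟩)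
      simp only [xk] at this
      rw [decide_eq_decide] at this
      omega
    intro k1 h1 k2 h2 he
    simp only [Finset.coe_range, Set.mem_Iio] at h1 h2
    rcases lt_trichotomy k1 k2 with h | h | h
    · exact absurd he (key _ _ h (by omega))
    · exact h
    · exact absurd he.symm (key _ _ h (by omega))
  rw [Finset.card_image_of_injOn hinj, Finset.card_range]

end LowerBound2



section InDegree

variable {n : ℕ}

lemma indeg_le_two [NeZero n] (v : Fin n × Fin n) :
    Set.ncard {u : Fin n × Fin n | Kstar n u v} ≤ 2 := by
  have hsub : {u : Fin n × Fin n | Kstar n u v} ⊆ {(v.1, v.2 - 1), (v.2, v.2)} := by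
    intro u hu
    rcases (kstar_char u v).mp hu with h | ⟨h, _⟩
    · exact Set.mem_insert_iff.mpr (Or.inl h)
    · exact Set.mem_insert_iff.mpr (Or.inr h)
  calc Set.ncard {u : Fin n × Fin n | Kstar n u v}
      ≤ Set.ncard ({(v.1, v.2 - 1), (v.2, v.2)} : Set (Fin n × Fin n)) :=
        Set.ncard_le_ncard hsub (Set.toFinite _)
    _ ≤ 2 := by
        apply le_trans (Set.ncard_insert_le _ _)
        simp [Set.ncard_singleton]

end InDegree

/-- `K*_n` has maximum in-degree at most two, no two independent
cycles, `ν(K*_n) = τ(K*_n) = n`, `ν*(K*_n) = 1`; consequently every monotone Boolean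
network with interaction graph `K*_n` has at most `n+1` fixed points, and some
monotone Boolean network with interaction graph `K*_n` has exactly `n+1` fixed
points. -/
theorem stmt13 (n : ℕ) (hn : 1 ≤ n) :
    (∀ v : Fin n × Fin n, Set.ncard {u : Fin n × Fin n | Kstar n u v} ≤ 2) ∧
    (¬ ∃ C₁ C₂ : List (Fin n × Fin n),
      IsCycle (Kstar n) C₁ ∧ IsCycle (Kstar n) C₂ ∧ Independent (Kstar n) C₁ C₂) ∧
    nu (Kstar n) = n ∧ tau (Kstar n) = n ∧ nuStar (Kstar n) = 1 ∧
    (∀ f : (Fin n × Fin n → Bool) → Fin n × Fin n → Bool, Monotone f →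
      (∀ u v, Kstar n u v ↔ Depends f u v) →
      Set.ncard {x : Fin n × Fin n → Bool | f x = x} ≤ n + 1) ∧
    (∃ f : (Fin n × Fin n → Bool) → Fin n × Fin n → Bool, Monotone f ∧
      (∀ u v, Kstar n u v ↔ Depends f u v) ∧
      Set.ncard {x : Fin n × Fin n → Bool | f x = x} = n + 1) := by
  haveI : NeZero n := ⟨by omega⟩
  refine ⟨indeg_le_two, no_indep_Kstar, nu_Kstar, tau_Kstar, nuStar_Kstar, ?_, ?_⟩
  · intro f hmono hIG
    exact upper_bound hmono hIG
  · exact ⟨exNet n, exNet_mono, exNet_IG, exNet_count⟩
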